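/- arXiv:1802.05296 — 4 statements merged into one kernel-verified Lean document; each statement's English description precedes it below -/
import Mathlib

section
/- Let n and p be natural numbers and let σ_1, ..., σ_n be positive real numbers. Let A_{n,p} be the set of vectors a ∈ ℕ^n such that for every i, either a_i = 0 or a_i ≥ 2, and Σ_{i=1}^n a_i = p. Then Σ_{a ∈ A_{n,p}} Π_{i=1}^n σ_i^{a_i} ≤ (9 · Σ_{i=1}^n σ_i²)^{p/2}. -/
open Finset




lemma geo_aux (p : ℕ) : ∑ j ∈ Ico 2 (p+3), (3:ℝ)^(p+2-j) ≤ 3^(p+2) := by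
  rw [Finset.sum_Ico_eq_sum_range]
  have h : ∀ i ∈ range (p+3-2), (3:ℝ)^(p+2-(2+i)) = (3:ℝ)^(p-i) := by
    intro i _; congr 1; omega
  rw [Finset.sum_congr rfl h]
  have h2 : (p+3-2) = p+1 := by omega
  rw [h2]
  have h3 : ∑ i ∈ range (p+1), (3:ℝ)^(p-i) = ∑ i ∈ range (p+1), (3:ℝ)^i := by
    have := Finset.sum_range_reflect (fun i => (3:ℝ)^i) (p+1)
    simpa using this
  rw [h3, geom_sum_eq (by norm_num)]
  have h4 : (0:ℝ) ≤ 3^(p+1) := by positivity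
  have h5 : (3:ℝ)^(p+2) = 3 * 3^(p+1) := by ring
  rw [h5]; linarith

lemma alg_lemma (p : ℕ) (x s' s : ℝ) (hx : 0 ≤ x) (hs' : 0 ≤ s') (hs : 0 ≤ s)
    (hsq : s'^2 + x^2 = s^2) :
    ∑ j ∈ (range (p+1)).filter (fun j => j = 0 ∨ 2 ≤ j), x^j * (3*s')^(p-j)
      ≤ (3*s)^p := by
  have hxs : x ≤ s := by nlinarith
  have hs's : s' ≤ s := by nlinarith
  match p with
  | 0 =>
    have h : (range 1).filter (fun j => j = 0 ∨ 2 ≤ j) = {0} := by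
      ext j; simp only [mem_filter, mem_range, mem_singleton]; omega
    rw [h]; simp
  | 1 =>
    have h : (range 2).filter (fun j => j = 0 ∨ 2 ≤ j) = {0} := by
      ext j; simp only [mem_filter, mem_range, mem_singleton]; omega
    rw [h]; simp; linarith
  | (p+2) =>
    have h : (range (p+2+1)).filter (fun j => j = 0 ∨ 2 ≤ j) = insert 0 (Ico 2 (p+3)) := by
      ext j; simp only [mem_filter, mem_range, mem_insert, mem_Ico]; omega
    rw [h, Finset.sum_insert (by simp)]
    have hterm : ∀ j ∈ Ico 2 (p+3), x^j * (3*s')^(p+2-j) ≤ (x^2 * s^p) * 3^(p+2-j) := by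
      intro j hj
      simp only [mem_Ico] at hj
      have h1 : x^j = x^2 * x^(j-2) := by rw [← pow_add]; congr 1; omega
      have h2 : (s:ℝ)^p = s^(j-2) * s^(p+2-j) := by rw [← pow_add]; congr 1; omega
      rw [h1, mul_pow, h2]
      have hx2 : x^(j-2) ≤ s^(j-2) := pow_le_pow_left₀ hx hxs _
      have hs2 : s'^(p+2-j) ≤ s^(p+2-j) := pow_le_pow_left₀ hs' hs's _
      calc x ^ 2 * x ^ (j - 2) * (3 ^ (p + 2 - j) * s' ^ (p + 2 - j))
          ≤ x ^ 2 * s ^ (j - 2) * (3 ^ (p + 2 - j) * s ^ (p + 2 - j)) := by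
            gcongr <;> positivity
        _ = x ^ 2 * (s ^ (j - 2) * s ^ (p + 2 - j)) * 3 ^ (p + 2 - j) := by ring
    have hsum : ∑ j ∈ Ico 2 (p+3), x^j * (3*s')^(p+2-j)
        ≤ (x^2 * s^p) * 3^(p+2) := by
      calc ∑ j ∈ Ico 2 (p+3), x^j * (3*s')^(p+2-j)
          ≤ ∑ j ∈ Ico 2 (p+3), (x^2 * s^p) * 3^(p+2-j) := Finset.sum_le_sum hterm
        _ = (x^2 * s^p) * ∑ j ∈ Ico 2 (p+3), (3:ℝ)^(p+2-j) := by rw [Finset.mul_sum]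
        _ ≤ (x^2 * s^p) * 3^(p+2) := by
            have := geo_aux p
            have hnn : (0:ℝ) ≤ x^2 * s^p := by positivity
            exact mul_le_mul_of_nonneg_left this hnn
    have hzero : x^0 * (3*s')^(p+2-0) ≤ 3^(p+2) * (s'^2 * s^p) := by
      simp only [pow_zero, one_mul, Nat.sub_zero, mul_pow]
      have : s'^(p+2) ≤ s'^2 * s^p := by
        have : s'^(p+2) = s'^2 * s'^p := by ring
        rw [this]
        have := pow_le_pow_left₀ hs' hs's p
        nlinarith [sq_nonneg s']
      nlinarith [pow_nonneg (by norm_num : (0:ℝ) ≤ 3) (p+2)]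
    have hfin : (3*s)^(p+2) = 3^(p+2) * (s'^2 * s^p) + (x^2 * s^p) * 3^(p+2) := by
      rw [mul_pow]
      have : s^(p+2) = s^2 * s^p := by ring
      rw [this, ← hsq]; ring
    rw [hfin]
    linarith


lemma decomp (n p : ℕ) (σ : Fin (n+1) → ℝ) :
    ∑ a ∈ (Fintype.piFinset fun _ : Fin (n+1) => range (p + 1)).filter
        (fun a => (∀ i, a i = 0 ∨ 2 ≤ a i) ∧ ∑ i, a i = p),
      ∏ i, σ i ^ a i
    = ∑ j ∈ (range (p+1)).filter (fun j => j = 0 ∨ 2 ≤ j),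
        σ (Fin.last n) ^ j *
        ∑ g ∈ (Fintype.piFinset fun _ : Fin n => range ((p-j) + 1)).filter
            (fun g => (∀ i, g i = 0 ∨ 2 ≤ g i) ∧ ∑ i, g i = p - j),
          ∏ i, σ (Fin.castSucc i) ^ g i := by
  simp_rw [Finset.mul_sum]
  rw [Finset.sum_sigma']
  refine Finset.sum_bij' (fun a _ => (⟨a (Fin.last n), Fin.init a⟩ : Σ _ : ℕ, (Fin n → ℕ)))
    (fun x _ => Fin.snoc x.2 x.1) ?_ ?_ ?_ ?_ ?_
  · -- hi : forward membership
    intro a ha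
    simp only [mem_filter, Fintype.mem_piFinset, mem_range] at ha
    obtain ⟨hmem, hcond, hsum⟩ := ha
    rw [Fin.sum_univ_castSucc] at hsum
    have hle : a (Fin.last n) ≤ p := by omega
    have hsum' : ∑ i, Fin.init a i = p - a (Fin.last n) := by
      simp only [Fin.init]; omega
    simp only [mem_sigma, mem_filter, Fintype.mem_piFinset, mem_range]
    refine ⟨⟨by omega, hcond (Fin.last n)⟩, ?_, fun i => hcond _, hsum'⟩
    intro i
    have : Fin.init a i ≤ ∑ k, Fin.init a k :=
      Finset.single_le_sum (fun k _ => Nat.zero_le _) (mem_univ i)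
    omega
  · -- hj : backward membership
    rintro ⟨j, g⟩ hx
    simp only [mem_sigma, mem_filter, Fintype.mem_piFinset, mem_range] at hx
    obtain ⟨⟨hjp, hjcond⟩, hgmem, hgcond, hgsum⟩ := hx
    simp only [mem_filter, Fintype.mem_piFinset, mem_range]
    have hjle : j ≤ p := by omega
    refine ⟨?_, ?_, ?_⟩
    · intro i
      refine Fin.lastCases ?_ ?_ i
      · simp only [Fin.snoc_last]; omega
      · intro k; simp only [Fin.snoc_castSucc]
        have := hgmem k; omega
    · intro i
      refine Fin.lastCases ?_ ?_ i
      · simpa using hjcond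
      · intro k; simpa using hgcond k
    · rw [Fin.sum_univ_castSucc]
      simp only [Fin.snoc_castSucc, Fin.snoc_last]
      omega
  · -- left_inv
    intro a _
    exact Fin.snoc_init_self a
  · -- right_inv
    rintro ⟨j, g⟩ _
    simp only [Fin.snoc_last, Fin.init_snoc]
  · -- term equality
    intro a _
    rw [Fin.prod_univ_castSucc]
    simp only [Fin.init]
    ring


lemma claim_sum_main (n : ℕ) : ∀ (p : ℕ) (σ : Fin n → ℝ), (∀ i, 0 ≤ σ i) →
    ∑ a ∈ (Fintype.piFinset fun _ : Fin n => Finset.range (p + 1)).filter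
        (fun a => (∀ i, a i = 0 ∨ 2 ≤ a i) ∧ ∑ i, a i = p),
      ∏ i, σ i ^ a i
      ≤ (3 * Real.sqrt (∑ i, σ i ^ 2)) ^ p := by
  induction n with
  | zero =>
    intro p σ _
    match p with
    | 0 => simp
    | (p+1) =>
      have h0 : ∀ a : Fin 0 → ℕ, ¬ ((∀ i, a i = 0 ∨ 2 ≤ a i) ∧ ∑ i, a i = p+1) := by
        intro a h; simp at h
      rw [Finset.filter_false_of_mem (fun a _ => h0 a), Finset.sum_empty]
      positivity
  | succ n ih =>
    intro p σ hσ
    rw [decomp]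
    set s' : ℝ := Real.sqrt (∑ i : Fin n, σ (Fin.castSucc i) ^ 2) with hs'def
    set s : ℝ := Real.sqrt (∑ i : Fin (n+1), σ i ^ 2) with hsdef
    have hs'0 : 0 ≤ s' := Real.sqrt_nonneg _
    have hs0 : 0 ≤ s := Real.sqrt_nonneg _
    have hx0 : 0 ≤ σ (Fin.last n) := hσ _
    have hsq : s' ^ 2 + σ (Fin.last n) ^ 2 = s ^ 2 := by
      rw [hs'def, hsdef, Real.sq_sqrt (by positivity), Real.sq_sqrt (by positivity),
        Fin.sum_univ_castSucc]
    calc ∑ j ∈ (range (p+1)).filter (fun j => j = 0 ∨ 2 ≤ j),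
          σ (Fin.last n) ^ j *
          ∑ g ∈ (Fintype.piFinset fun _ : Fin n => range ((p-j) + 1)).filter
              (fun g => (∀ i, g i = 0 ∨ 2 ≤ g i) ∧ ∑ i, g i = p - j),
            ∏ i, σ (Fin.castSucc i) ^ g i
        ≤ ∑ j ∈ (range (p+1)).filter (fun j => j = 0 ∨ 2 ≤ j),
            σ (Fin.last n) ^ j * (3 * s') ^ (p - j) := by
          refine Finset.sum_le_sum fun j _ => ?_
          exact mul_le_mul_of_nonneg_left
            (ih (p - j) (fun i => σ (Fin.castSucc i)) (fun i => hσ _))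
            (pow_nonneg hx0 j)
      _ ≤ (3 * s) ^ p := alg_lemma p (σ (Fin.last n)) s' s hx0 hs'0 hs0 hsq

/-- Claim `clm:sum`: Let `A_{n,p}` be the set of multi-indices
`a ∈ ℕ^n` whose coordinates are all either `0` or at least `2` and sum to `p`.
For positive reals `σ₁, …, σₙ`,
`∑_{a ∈ A_{n,p}} ∏ᵢ σᵢ^{aᵢ} ≤ (9 ∑ᵢ σᵢ²)^{p/2}`. -/
theorem claim_sum (n p : ℕ) (σ : Fin n → ℝ) (hσ : ∀ i, 0 < σ i) :
    ∑ a ∈ (Fintype.piFinset fun _ : Fin n => Finset.range (p + 1)).filter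
        (fun a => (∀ i, a i = 0 ∨ 2 ≤ a i) ∧ ∑ i, a i = p),
      ∏ i, σ i ^ a i
      ≤ (9 * ∑ i, σ i ^ 2) ^ ((p : ℝ) / 2) := by
  have hS : (0:ℝ) ≤ ∑ i, σ i ^ 2 := by positivity
  have key : (9 * ∑ i, σ i ^ 2) ^ ((p : ℝ) / 2)
      = (3 * Real.sqrt (∑ i, σ i ^ 2)) ^ p := by
    have h9 : (0:ℝ) ≤ 9 * ∑ i, σ i ^ 2 := by positivity
    have h1 : ((p : ℝ) / 2) = (1/2 : ℝ) * (p : ℝ) := by ring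
    rw [h1, Real.rpow_mul h9, Real.rpow_natCast]
    congr 1
    rw [← Real.sqrt_eq_rpow, Real.sqrt_mul (by norm_num : (0:ℝ) ≤ 9)]
    congr 1
    rw [show (9:ℝ) = 3^2 by norm_num, Real.sqrt_sq (by norm_num : (0:ℝ) ≤ 3)]
  rw [key]
  exact claim_sum_main n p σ (fun i => (hσ i).le)
end

section
/- Let X_1, ..., X_n be real random variables on a probability space such that X_i is σ_i-subexponential for each i, and such that the family X_1, ..., X_n is p-wise independent for a positive integer p. Let σ² = Σ_{i=1}^n σ_i² and X = Σ_{i=1}^n X_i. Then E[(X − E[X])^p] ≤ (3σ)^p · (2p)^p. -/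
/-!
Centre the variables, `Yᵢ = Xᵢ - E[Xᵢ]`, and expand `(∑ᵢ Yᵢ)^p` multinomially. A monomial
`∏ᵢ Yᵢ^kᵢ` with `∑ᵢ kᵢ = p` involves at most `p` of the `Yᵢ`, so `p`-wise independence factors
its expectation into `∏ᵢ E[Yᵢ^kᵢ]`, which vanishes as soon as some `kᵢ = 1` and is otherwise at most
`∏ᵢ σᵢ^kᵢ kᵢ^kᵢ`. Since `multinomial k · ∏ᵢ kᵢ^kᵢ ≤ p^p`, the moment is at most `p^p` times the
coefficient of `t^p` in `∏ᵢ (1 + σᵢ²t² + σᵢ³t³ + ⋯)`, and evaluating this product at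
`t = 1/(2σ)` bounds that coefficient by `e^{1/2} (2σ)^p`.
-/

open MeasureTheory ProbabilityTheory Finset

theorem Nat.multinomial_mul_prod_pow_self_le {ι : Type*} [Fintype ι] (k : ι → ℕ) :
    multinomial univ k * ∏ i, k i ^ k i ≤ (∑ i, k i) ^ ∑ i, k i := by
  classical
  rw [Finset.sum_pow_eq_sum_piAntidiag]
  exact single_le_sum (f := fun k' => multinomial univ k' * ∏ i, k i ^ k' i)
    (fun _ _ => Nat.zero_le _)
    ((mem_piAntidiag (s := univ) (f := k)).2 ⟨rfl, fun i _ => mem_univ i⟩)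

theorem Finset.sum_piAntidiag_prod_le_prod_sum_range {ι R : Type*} [Fintype ι] [DecidableEq ι]
    [CommSemiring R] [PartialOrder R] [IsOrderedRing R] (g : ι → ℕ → R) (hg : ∀ i j, 0 ≤ g i j)
    (p : ℕ) : ∑ k ∈ piAntidiag univ p, ∏ i, g i (k i) ≤ ∏ i, ∑ j ∈ range (p + 1), g i j := by
  rw [prod_univ_sum]
  refine sum_le_sum_of_subset_of_nonneg (fun k hk => ?_) fun k _ _ => prod_nonneg fun i _ => hg i _
  obtain ⟨hsum, -⟩ := mem_piAntidiag.1 hk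
  refine Fintype.mem_piFinset.2 fun i => mem_range_succ_iff.2 ?_
  exact hsum ▸ single_le_sum (fun _ _ => Nat.zero_le _) (mem_univ i)

/-- Times `j ^ j`, a bound on `|E[Y ^ j]|` for centred `σ`-subexponential `Y`; the first moment
vanishes. -/
def centeredMomentWeight (σ : ℝ) (j : ℕ) : ℝ := if j = 1 then 0 else σ ^ j

namespace centeredMomentWeight

theorem nonneg {σ : ℝ} (hσ : 0 ≤ σ) (j : ℕ) : 0 ≤ centeredMomentWeight σ j := by
  unfold centeredMomentWeight; split_ifs <;> positivity

theorem mul (t σ : ℝ) (j : ℕ) :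
    centeredMomentWeight (t * σ) j = t ^ j * centeredMomentWeight σ j := by
  unfold centeredMomentWeight; split_ifs <;> simp [mul_pow]

theorem zero_left {j : ℕ} (hj : j ≠ 0) : centeredMomentWeight 0 j = 0 := by
  unfold centeredMomentWeight; split_ifs <;> simp [hj]

theorem sum_range_le {x : ℝ} (hx₀ : 0 ≤ x) (hx : x ≤ 1 / 2) (p : ℕ) :
    ∑ j ∈ range (p + 1), centeredMomentWeight x j ≤ 1 + 2 * x ^ 2 := by
  have hgeom : ∑ j ∈ range p, x ^ j ≤ 2 := by
    calc ∑ j ∈ range p, x ^ j ≤ x ^ 0 / (1 - x) := by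
          simpa using geom_sum_Ico_le_of_lt_one (m := 0) (n := p) hx₀ (by linarith)
      _ ≤ 2 := by rw [pow_zero, div_le_iff₀ (by linarith)]; linarith
  calc ∑ j ∈ range (p + 1), centeredMomentWeight x j
      ≤ ∑ j ∈ range (p + 2), centeredMomentWeight x j :=
        sum_le_sum_of_subset_of_nonneg (range_subset_range.2 (by omega))
          fun j _ _ => nonneg hx₀ j
    _ = x ^ 2 * ∑ j ∈ range p, x ^ j + 1 := by
        have hshift (j : ℕ) : centeredMomentWeight x (j + 1 + 1) = x ^ 2 * x ^ j := by
          rw [centeredMomentWeight, if_neg (by omega)]; ring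
        rw [sum_range_succ', sum_range_succ', mul_sum]
        simp only [hshift]
        simp [centeredMomentWeight]
    _ ≤ 1 + 2 * x ^ 2 := by nlinarith [sq_nonneg x]

end centeredMomentWeight

theorem sum_piAntidiag_prod_centeredMomentWeight_le_exp {ι : Type*} [Fintype ι] [DecidableEq ι]
    {σ : ι → ℝ} (hσ : ∀ i, 0 ≤ σ i) {t : ℝ} (ht : 0 ≤ t) (htσ : ∀ i, t * σ i ≤ 1 / 2) (p : ℕ) :
    t ^ p * ∑ k ∈ piAntidiag univ p, ∏ i, centeredMomentWeight (σ i) (k i) ≤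
      Real.exp (2 * t ^ 2 * ∑ i, σ i ^ 2) := by
  have htσ₀ : ∀ i, 0 ≤ t * σ i := fun i => mul_nonneg ht (hσ i)
  calc t ^ p * ∑ k ∈ piAntidiag univ p, ∏ i, centeredMomentWeight (σ i) (k i)
      = ∑ k ∈ piAntidiag univ p, ∏ i, centeredMomentWeight (t * σ i) (k i) := by
        rw [mul_sum]
        refine sum_congr rfl fun k hk => ?_
        simp_rw [centeredMomentWeight.mul, prod_mul_distrib, prod_pow_eq_pow_sum,
          (mem_piAntidiag.1 hk).1]
    _ ≤ ∏ i, ∑ j ∈ range (p + 1), centeredMomentWeight (t * σ i) j :=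
        sum_piAntidiag_prod_le_prod_sum_range _
          (fun i j => centeredMomentWeight.nonneg (htσ₀ i) j) p
    _ ≤ ∏ i, Real.exp (2 * (t * σ i) ^ 2) := by
        refine prod_le_prod
          (fun i _ => sum_nonneg fun j _ => centeredMomentWeight.nonneg (htσ₀ i) j)
          fun i _ => (centeredMomentWeight.sum_range_le (htσ₀ i) (htσ i) p).trans ?_
        linarith [Real.add_one_le_exp (2 * (t * σ i) ^ 2)]
    _ = Real.exp (2 * t ^ 2 * ∑ i, σ i ^ 2) := by
        rw [← Real.exp_sum, mul_sum]
        simp_rw [mul_pow, mul_assoc]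

theorem sum_piAntidiag_prod_centeredMomentWeight_le {ι : Type*} [Fintype ι] [DecidableEq ι]
    {σ : ι → ℝ} (hσ : ∀ i, 0 ≤ σ i) {p : ℕ} (hp : p ≠ 0) :
    ∑ k ∈ piAntidiag univ p, ∏ i, centeredMomentWeight (σ i) (k i) ≤
      Real.exp (1 / 2) * (2 * Real.sqrt (∑ i, σ i ^ 2)) ^ p := by
  set s := Real.sqrt (∑ i, σ i ^ 2) with hs_def
  have hσs : ∀ i, σ i ≤ s := fun i =>
    Real.le_sqrt_of_sq_le (single_le_sum (fun j _ => sq_nonneg (σ j)) (mem_univ i))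
  rcases (Real.sqrt_nonneg _ : 0 ≤ s).eq_or_lt with hs | hs
  · have hσ₀ : ∀ i, σ i = 0 := fun i => le_antisymm (hs ▸ hσs i) (hσ i)
    refine (sum_eq_zero fun k hk => ?_).trans_le (by positivity)
    obtain ⟨i, hi⟩ : ∃ i, k i ≠ 0 := by
      by_contra! h
      simp [h, eq_comm, hp] at hk
    exact prod_eq_zero (mem_univ i) (by rw [hσ₀ i]; exact centeredMomentWeight.zero_left hi)
  · have key := sum_piAntidiag_prod_centeredMomentWeight_le_exp hσ (t := (2 * s)⁻¹)
      (by positivity) (fun i => by rw [inv_mul_le_iff₀ (by positivity)]; linarith [hσs i]) p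
    have hexp : 2 * (2 * s)⁻¹ ^ 2 * ∑ i, σ i ^ 2 = 1 / 2 := by
      rw [← Real.sq_sqrt (sum_nonneg fun i _ => sq_nonneg (σ i)), ← hs_def]
      have hs₀ : s ≠ 0 := hs.ne'
      field_simp
    rwa [hexp, inv_pow, inv_mul_le_iff₀ (by positivity), mul_comm] at key

theorem pow_mul_exp_half_mul_pow_le {p : ℕ} (hp : p ≠ 0) {s : ℝ} (hs : 0 ≤ s) :
    (p : ℝ) ^ p * (Real.exp (1 / 2) * (2 * s) ^ p) ≤ (3 * s) ^ p * (2 * (p : ℝ)) ^ p := by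
  have hexp : Real.exp (1 / 2) ≤ 3 ^ p :=
    calc Real.exp (1 / 2) ≤ Real.exp 1 := Real.exp_le_exp.2 (by norm_num)
      _ ≤ 3 := Real.exp_one_lt_three.le
      _ ≤ 3 ^ p := le_self_pow₀ (by norm_num) hp
  calc (p : ℝ) ^ p * (Real.exp (1 / 2) * (2 * s) ^ p) ≤ (p : ℝ) ^ p * (3 ^ p * (2 * s) ^ p) := by
        gcongr
    _ = (3 * s) ^ p * (2 * (p : ℝ)) ^ p := by rw [← mul_pow, ← mul_pow, ← mul_pow]; ring

def KWiseIndepFun {Ω ι β : Type*} [MeasurableSpace Ω] [MeasurableSpace β] (p : ℕ)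
    (X : ι → Ω → β) (μ : Measure Ω) : Prop :=
  ∀ s : Finset ι, s.card ≤ p → iIndepFun (fun i : s => X i) μ

section
variable {Ω ι : Type*} [MeasurableSpace Ω] {μ : Measure Ω}

theorem KWiseIndepFun.comp {β γ : Type*} [MeasurableSpace β] [MeasurableSpace γ] {p : ℕ}
    {X : ι → Ω → β} (h : KWiseIndepFun p X μ) (f : ι → β → γ) (hf : ∀ i, Measurable (f i)) :
    KWiseIndepFun p (fun i => f i ∘ X i) μ :=
  fun s hs => (h s hs).comp (fun i : s => f i) fun i => hf i

theorem KWiseIndepFun.integral_prod_pow [Fintype ι] [IsProbabilityMeasure μ] {p : ℕ}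
    {Y : ι → Ω → ℝ} (h : KWiseIndepFun p Y μ) (hY : ∀ i, AEMeasurable (Y i) μ) {k : ι → ℕ}
    (hk : ∑ i, k i ≤ p) :
    ∫ ω, ∏ i, Y i ω ^ k i ∂μ = ∏ i, ∫ ω, Y i ω ^ k i ∂μ := by
  classical
  set s := univ.filter (k · ≠ 0)
  have hs : s.card ≤ p := by
    calc s.card = s.card • 1 := by rw [smul_eq_mul, mul_one]
      _ ≤ ∑ i ∈ s, k i :=
        card_nsmul_le_sum s k 1 fun i hi => Nat.one_le_iff_ne_zero.2 (mem_filter.1 hi).2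
      _ ≤ p := by rwa [sum_filter_ne_zero]
  have hsupp : ∀ F : ι → ℕ → ℝ, (∀ i, F i 0 = 1) → ∏ i, F i (k i) = ∏ i : s, F i (k i) := by
    intro F hF
    rw [prod_coe_sort s fun i => F i (k i)]
    refine (prod_subset (filter_subset _ _) fun i _ hi => ?_).symm
    simp only [mem_filter, mem_univ, true_and, not_not] at hi
    rw [hi, hF]
  have hpoint : ∀ ω, ∏ i, Y i ω ^ k i = ∏ i : s, Y i ω ^ k i := fun ω =>
    hsupp (fun i j => Y i ω ^ j) fun i => pow_zero _
  rw [integral_congr_ae (ae_of_all _ hpoint),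
    hsupp (fun i j => ∫ ω, Y i ω ^ j ∂μ) fun i => by simp]
  exact (h s hs).integral_fun_prod_comp (X := fun i : s => Y i) (f := fun i x => x ^ k i)
    (fun i => hY i) fun i => (continuous_pow _).aestronglyMeasurable

theorem integrable_prod_pow_of_memLp [Fintype ι] [IsFiniteMeasure μ] {p : ℕ}
    {Y : ι → Ω → ℝ} (hY : ∀ i, MemLp (Y i) p μ) {k : ι → ℕ} (hk : ∑ i, k i = p) :
    Integrable (fun ω => ∏ i, Y i ω ^ k i) μ := by
  have hS : MemLp (fun ω => ∑ i, ‖Y i ω‖) p μ := memLp_finsetSum univ fun i _ => (hY i).norm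
  refine hS.integrable_norm_pow'.mono'
    (Finset.aestronglyMeasurable_fun_prod _ fun i _ => ((hY i).1.pow _)) (ae_of_all _ fun ω => ?_)
  calc ‖∏ i, Y i ω ^ k i‖ = ∏ i, ‖Y i ω‖ ^ k i := by simp [norm_prod, norm_pow]
    _ ≤ ∏ i, (∑ j, ‖Y j ω‖) ^ k i :=
        prod_le_prod (fun _ _ => by positivity) fun i _ => pow_le_pow_left₀ (norm_nonneg _)
          (single_le_sum (fun j _ => norm_nonneg (Y j ω)) (mem_univ i)) _
    _ = ‖∑ j, ‖Y j ω‖‖ ^ p := by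
        rw [prod_pow_eq_pow_sum, hk, Real.norm_of_nonneg (by positivity)]

theorem KWiseIndepFun.integral_sum_pow [Fintype ι] [DecidableEq ι] [IsProbabilityMeasure μ]
    {p : ℕ} {Y : ι → Ω → ℝ} (h : KWiseIndepFun p Y μ) (hY : ∀ i, MemLp (Y i) p μ) :
    ∫ ω, (∑ i, Y i ω) ^ p ∂μ =
      ∑ k ∈ piAntidiag univ p, (Nat.multinomial univ k : ℝ) * ∏ i, ∫ ω, Y i ω ^ k i ∂μ := by
  simp_rw [sum_pow_eq_sum_piAntidiag]
  rw [integral_finsetSum _ fun k hk =>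
    (integrable_prod_pow_of_memLp hY (mem_piAntidiag.1 hk).1).const_mul _]
  refine sum_congr rfl fun k hk => ?_
  rw [integral_const_mul,
    h.integral_prod_pow (fun i => (hY i).1.aemeasurable) (mem_piAntidiag.1 hk).1.le]

theorem abs_integral_pow_le_centeredMomentWeight [IsProbabilityMeasure μ] {Y : Ω → ℝ} {σ : ℝ}
    (hmean : ∫ ω, Y ω ∂μ = 0)
    (hmom : ∀ j : ℕ, 1 ≤ j → ∫ ω, |Y ω| ^ j ∂μ ≤ σ ^ j * (j : ℝ) ^ j) (j : ℕ) :
    |∫ ω, Y ω ^ j ∂μ| ≤ centeredMomentWeight σ j * (j : ℝ) ^ j := by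
  rcases Nat.lt_trichotomy j 1 with hj | rfl | hj
  · simp [Nat.lt_one_iff.1 hj, centeredMomentWeight]
  · simp [hmean, centeredMomentWeight]
  · calc |∫ ω, Y ω ^ j ∂μ| ≤ ∫ ω, |Y ω| ^ j ∂μ :=
          abs_integral_le_integral_abs.trans_eq (by simp_rw [abs_pow])
      _ ≤ centeredMomentWeight σ j * (j : ℝ) ^ j := by
          simpa [centeredMomentWeight, hj.ne'] using hmom j hj.le

theorem KWiseIndepFun.integral_sum_pow_le [Fintype ι] [DecidableEq ι] [IsProbabilityMeasure μ]
    {p : ℕ} {Y : ι → Ω → ℝ} {σ : ι → ℝ} (h : KWiseIndepFun p Y μ) (hY : ∀ i, MemLp (Y i) p μ)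
    (hmean : ∀ i, ∫ ω, Y i ω ∂μ = 0) (hσ : ∀ i, 0 ≤ σ i)
    (hmom : ∀ i (j : ℕ), 1 ≤ j → ∫ ω, |Y i ω| ^ j ∂μ ≤ σ i ^ j * (j : ℝ) ^ j) :
    ∫ ω, (∑ i, Y i ω) ^ p ∂μ ≤
      (p : ℝ) ^ p * ∑ k ∈ piAntidiag univ p, ∏ i, centeredMomentWeight (σ i) (k i) := by
  rw [h.integral_sum_pow hY, mul_sum]
  refine sum_le_sum fun k hk => ?_
  have hmult : (Nat.multinomial univ k : ℝ) * ∏ i, (k i : ℝ) ^ k i ≤ (p : ℝ) ^ p := by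
    exact_mod_cast (mem_piAntidiag.1 hk).1 ▸ Nat.multinomial_mul_prod_pow_self_le k
  calc (Nat.multinomial univ k : ℝ) * ∏ i, ∫ ω, Y i ω ^ k i ∂μ
      ≤ Nat.multinomial univ k * ∏ i, |∫ ω, Y i ω ^ k i ∂μ| := by
        rw [← abs_prod]; gcongr; exact le_abs_self _
    _ ≤ Nat.multinomial univ k * ∏ i, (centeredMomentWeight (σ i) (k i) * (k i : ℝ) ^ k i) := by
        gcongr with i
        exact abs_integral_pow_le_centeredMomentWeight (hmean i) (hmom i) (k i)
    _ = (Nat.multinomial univ k * ∏ i, (k i : ℝ) ^ k i) *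
          ∏ i, centeredMomentWeight (σ i) (k i) := by
        rw [prod_mul_distrib]; ring
    _ ≤ (p : ℝ) ^ p * ∏ i, centeredMomentWeight (σ i) (k i) :=
        mul_le_mul_of_nonneg_right hmult
          (prod_nonneg fun i _ => centeredMomentWeight.nonneg (hσ i) _)

end

/-- Lemma `lem:pwiseconcentration`, moment bound: if `X₁, …, Xₙ` are
`σᵢ`-subexponential real random variables (`E[|Xᵢ − E Xᵢ|^k] ≤ σᵢ^k k^k` for all `k ≥ 1`)
that are `p`-wise independent, and `σ² = ∑ᵢ σᵢ²`, `X = ∑ᵢ Xᵢ`, then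
`E[(X − E X)^p] ≤ (3σ)^p (2p)^p`. -/
theorem pwise_independent_moment_bound
    {Ω : Type*} [MeasurableSpace Ω] (μ : Measure Ω) [IsProbabilityMeasure μ]
    (n p : ℕ) (hp : 1 ≤ p) (X : Fin n → Ω → ℝ) (σ : Fin n → ℝ)
    (hσ : ∀ i, 0 ≤ σ i)
    (hmeas : ∀ i, Measurable (X i))
    (hint : ∀ (i : Fin n) (k : ℕ), 1 ≤ k →
      Integrable (fun ω => |X i ω - ∫ x, X i x ∂μ| ^ k) μ)
    (hsub : ∀ (i : Fin n) (k : ℕ), 1 ≤ k →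
      (∫ ω, |X i ω - ∫ x, X i x ∂μ| ^ k ∂μ) ≤ σ i ^ k * (k : ℝ) ^ k)
    (hindep : ∀ s : Finset (Fin n), s.card ≤ p →
      iIndepFun (m := fun _ : s => (inferInstance : MeasurableSpace ℝ))
        (fun i : s => X i.1) μ) :
    (∫ ω, ((∑ i, X i ω) - ∫ x, ∑ i, X i x ∂μ) ^ p ∂μ) ≤
      (3 * Real.sqrt (∑ i, σ i ^ 2)) ^ p * (2 * (p : ℝ)) ^ p := by
  set Y : Fin n → Ω → ℝ := fun i ω => X i ω - ∫ x, X i x ∂μ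
  have hYmeas (i : Fin n) : AEStronglyMeasurable (Y i) μ :=
    ((hmeas i).sub_const _).aestronglyMeasurable
  have hYmemLp (i : Fin n) : MemLp (Y i) p μ := by
    rw [← integrable_norm_rpow_iff (hYmeas i) (by exact_mod_cast (by omega : p ≠ 0)) (by simp)]
    simpa using hint i p hp
  have hXint (i : Fin n) : Integrable (X i) μ := by
    have hY : Integrable (Y i) μ :=
      (integrable_norm_iff (hYmeas i)).1 (by simpa using hint i 1 le_rfl)
    exact integrable_add_const_iff.1 (by simpa only [Y, sub_eq_add_neg] using hY)
  have hYmean (i : Fin n) : ∫ ω, Y i ω ∂μ = 0 := by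
    simp [Y, integral_sub (hXint i) (integrable_const _)]
  have hYind : KWiseIndepFun p Y μ :=
    KWiseIndepFun.comp hindep (fun i x => x - ∫ x, X i x ∂μ) fun i => measurable_id.sub_const _
  calc ∫ ω, ((∑ i, X i ω) - ∫ x, ∑ i, X i x ∂μ) ^ p ∂μ = ∫ ω, (∑ i, Y i ω) ^ p ∂μ := by
        simp [Y, integral_finsetSum _ fun i _ => hXint i]
    _ ≤ (p : ℝ) ^ p * ∑ k ∈ piAntidiag univ p, ∏ i, centeredMomentWeight (σ i) (k i) :=
        hYind.integral_sum_pow_le hYmemLp hYmean hσ hsub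
    _ ≤ (p : ℝ) ^ p * (Real.exp (1 / 2) * (2 * Real.sqrt (∑ i, σ i ^ 2)) ^ p) := by
        gcongr
        exact sum_piAntidiag_prod_centeredMomentWeight_le hσ (by omega)
    _ ≤ (3 * Real.sqrt (∑ i, σ i ^ 2)) ^ p * (2 * (p : ℝ)) ^ p :=
        pow_mul_exp_half_mul_pow_le (by omega) (Real.sqrt_nonneg _)
end

section
/- Let X_1, ..., X_n be random vectors in ℝ^d on a probability space such that the norm ‖X_i − E[X_i]‖ satisfies E[‖X_i − E[X_i]‖^k] ≤ σ_i^k k^k for every positive integer k, and such that the family X_1, ..., X_n is p-wise independent for an even positive integer p. Let σ² = Σ_{i=1}^n σ_i² and X = Σ_{i=1}^n X_i. Then E[‖X − E[X]‖^p] ≤ (3σ)^p · (2p)^p. -/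
/-!
Write `Yᵢ = Xᵢ - E Xᵢ` and `p = 2q`. Expanding `‖∑ᵢ Yᵢ‖ ^ 2q = ⟪∑ᵢ Yᵢ, ∑ᵢ Yᵢ⟫ ^ q` gives one term
`∏ₖ ⟪Y_{s(k,0)}, Y_{s(k,1)}⟫` for each assignment `s` of indices to the `2q` slots. At most `2q`
indices occur in a term, so they are independent. If some index fills a single slot, the term is
linear in that centred vector (expand it in an orthonormal basis) and has mean zero. Otherwise, if
index `i` fills `cᵢ ≥ 2` slots, the mean is at most `∏ᵢ E‖Yᵢ‖ ^ cᵢ ≤ ∏ᵢ (σᵢ cᵢ) ^ cᵢ`.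

These weights are summed by induction on the number `m` of slots, peeling off the block of slots
that share the index of a fixed slot: since `∑ᵢ σᵢ ^ c ≤ σ ^ c` for `c ≥ 2` and
`binom(m, c) c ^ c ≤ (e m) ^ c`, a block of size `c` costs a factor `2 ^ (m - c)` against
`(e σ m) ^ m`, and the total is at most `(2 e σ m) ^ m ≤ (3 σ) ^ m (2 m) ^ m`.
-/

open MeasureTheory ProbabilityTheory Finset
open scoped RealInnerProductSpace ENNReal

lemma Finset.sum_le_sum_of_injOn {α β M : Type*} [AddCommMonoid M] [PartialOrder M]
    [IsOrderedAddMonoid M] {s : Finset α} {t : Finset β} (e : α → β) (he : Set.InjOn e s)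
    (hst : Set.MapsTo e s t) {f : α → M} {g : β → M} (hg : ∀ b ∈ t, 0 ≤ g b)
    (hfg : ∀ a ∈ s, f a ≤ g (e a)) : ∑ a ∈ s, f a ≤ ∑ b ∈ t, g b := by
  classical
  calc ∑ a ∈ s, f a ≤ ∑ a ∈ s, g (e a) := sum_le_sum hfg
    _ = ∑ b ∈ s.image e, g b := (sum_image he).symm
    _ ≤ ∑ b ∈ t, g b :=
      sum_le_sum_of_subset_of_nonneg (image_subset_iff.2 hst) fun b hb _ => hg b hb

lemma sum_two_pow_sub_le (m : ℕ) : ∑ c ∈ range (m + 1) with 2 ≤ c, (2 : ℝ) ^ (m - c) ≤ 2 ^ m := by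
  have hgeom : ∑ j ∈ range m, (2 : ℝ) ^ j = 2 ^ m - 1 := by
    rw [← geom_sum_mul, show (2 : ℝ) - 1 = 1 by norm_num, mul_one]
  calc ∑ c ∈ range (m + 1) with 2 ≤ c, (2 : ℝ) ^ (m - c) ≤ ∑ j ∈ range m, (2 : ℝ) ^ j := by
        refine sum_le_sum_of_injOn (m - ·) (fun c hc c' hc' h => ?_) (fun c hc => ?_)
          (fun _ _ => by positivity) (fun _ _ => le_rfl)
        · simp only [coe_filter, mem_range, Set.mem_ofPred_eq] at hc hc'
          simp only at h
          omega
        · simp only [coe_filter, mem_range, Set.mem_ofPred_eq] at hc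
          simp only [coe_range, Set.mem_Iio]
          omega
    _ ≤ 2 ^ m := by linarith

lemma choose_mul_pow_self_le (m c : ℕ) :
    (m.choose c : ℝ) * (c : ℝ) ^ c ≤ (m : ℝ) ^ c * Real.exp 1 ^ c := by
  have hexp : (c : ℝ) ^ c / c.factorial ≤ Real.exp 1 ^ c := by
    simpa [← Real.exp_nat_mul] using Real.pow_div_factorial_le_exp (c : ℝ) (Nat.cast_nonneg c) c
  calc (m.choose c : ℝ) * (c : ℝ) ^ c ≤ (m : ℝ) ^ c / c.factorial * (c : ℝ) ^ c :=
        mul_le_mul_of_nonneg_right (Nat.choose_le_pow_div c m) (by positivity)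
    _ = (m : ℝ) ^ c * ((c : ℝ) ^ c / c.factorial) := by ring
    _ ≤ (m : ℝ) ^ c * Real.exp 1 ^ c := mul_le_mul_of_nonneg_left hexp (by positivity)

lemma sum_pow_le_sqrt_sum_sq_pow {ι : Type*} [Fintype ι] {σ : ι → ℝ} (hσ : ∀ i, 0 ≤ σ i)
    {c : ℕ} (hc : 2 ≤ c) : ∑ i, σ i ^ c ≤ √(∑ i, σ i ^ 2) ^ c := by
  set τ := √(∑ i, σ i ^ 2)
  have hστ : ∀ i, σ i ≤ τ := fun i =>
    Real.le_sqrt_of_sq_le (single_le_sum (fun j _ => sq_nonneg (σ j)) (mem_univ i))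
  obtain ⟨j, rfl⟩ := Nat.exists_eq_add_of_le hc
  calc ∑ i, σ i ^ (2 + j) = ∑ i, σ i ^ 2 * σ i ^ j := by simp only [pow_add]
    _ ≤ ∑ i, σ i ^ 2 * τ ^ j := sum_le_sum fun i _ =>
        mul_le_mul_of_nonneg_left (pow_le_pow_left₀ (hσ i) (hστ i) j) (sq_nonneg _)
    _ = τ ^ (2 + j) := by
        rw [← sum_mul, ← Real.sq_sqrt (sum_nonneg fun i _ => sq_nonneg (σ i)), pow_add]

lemma two_mul_exp_one_mul_pow_le {τ : ℝ} (hτ : 0 ≤ τ) (m : ℕ) :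
    (2 * Real.exp 1 * τ) ^ m * (m : ℝ) ^ m ≤ (3 * τ) ^ m * (2 * (m : ℝ)) ^ m := by
  rw [← mul_pow, ← mul_pow]
  refine pow_le_pow_left₀ (by positivity) ?_ _
  have he : Real.exp 1 ≤ 3 := Real.exp_one_lt_d9.le.trans (by norm_num)
  nlinarith [mul_nonneg (mul_nonneg (sub_nonneg.2 he) hτ) (Nat.cast_nonneg (α := ℝ) m)]

/-- A block of `c` slots bounded by `(τ c) ^ c`, times the inductive bound for the other `m - c`. -/
noncomputable def blockTerm (τ : ℝ) (m c : ℕ) : ℝ :=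
  (τ * c) ^ c * ((2 * Real.exp 1 * τ) ^ (m - c) * ((m - c : ℕ) : ℝ) ^ (m - c))

lemma blockTerm_nonneg {τ : ℝ} (hτ : 0 ≤ τ) (m c : ℕ) : 0 ≤ blockTerm τ m c := by
  unfold blockTerm
  positivity

lemma choose_mul_blockTerm_le {τ : ℝ} (hτ : 0 ≤ τ) {m c : ℕ} (hcm : c ≤ m) :
    (m.choose c : ℝ) * blockTerm τ m c ≤ (Real.exp 1 * τ * m) ^ m * 2 ^ (m - c) := by
  have hrest : ((m - c : ℕ) : ℝ) ^ (m - c) ≤ (m : ℝ) ^ (m - c) :=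
    pow_le_pow_left₀ (Nat.cast_nonneg _) (Nat.cast_le.2 (Nat.sub_le m c)) _
  calc (m.choose c : ℝ) * blockTerm τ m c
      = ((m.choose c : ℝ) * (c : ℝ) ^ c) * τ ^ c *
          ((2 * Real.exp 1 * τ) ^ (m - c) * ((m - c : ℕ) : ℝ) ^ (m - c)) := by
        rw [blockTerm]
        ring
    _ ≤ ((m : ℝ) ^ c * Real.exp 1 ^ c) * τ ^ c *
          ((2 * Real.exp 1 * τ) ^ (m - c) * (m : ℝ) ^ (m - c)) := by
        gcongr ?_ * _ * (_ * ?_)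
        exact choose_mul_pow_self_le m c
    _ = (Real.exp 1 * τ * m) ^ (c + (m - c)) * 2 ^ (m - c) := by ring
    _ = (Real.exp 1 * τ * m) ^ m * 2 ^ (m - c) := by rw [Nat.add_sub_cancel' hcm]

lemma sum_choose_mul_blockTerm_le {τ : ℝ} (hτ : 0 ≤ τ) (m : ℕ) :
    ∑ c ∈ range (m + 1) with 2 ≤ c, (m.choose c : ℝ) * blockTerm τ m c ≤
      (2 * Real.exp 1 * τ) ^ m * (m : ℝ) ^ m :=
  calc ∑ c ∈ range (m + 1) with 2 ≤ c, (m.choose c : ℝ) * blockTerm τ m c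
      ≤ ∑ c ∈ range (m + 1) with 2 ≤ c, (Real.exp 1 * τ * m) ^ m * 2 ^ (m - c) :=
        sum_le_sum fun c hc =>
          choose_mul_blockTerm_le hτ (Nat.lt_succ_iff.1 (mem_range.1 (mem_filter.1 hc).1))
    _ ≤ (Real.exp 1 * τ * m) ^ m * 2 ^ m := by
        rw [← mul_sum]
        exact mul_le_mul_of_nonneg_left (sum_two_pow_sub_le m) (by positivity)
    _ = (2 * Real.exp 1 * τ) ^ m * (m : ℝ) ^ m := by ring

lemma sum_powerset_blockTerm_le {κ : Type*} {τ : ℝ} (hτ : 0 ≤ τ) (S : Finset κ) :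
    ∑ F ∈ S.powerset with 2 ≤ #F, blockTerm τ #S #F ≤
      (2 * Real.exp 1 * τ) ^ #S * (#S : ℝ) ^ #S := by
  have h := sum_powerset_apply_card (fun c => if 2 ≤ c then blockTerm τ #S c else 0) (x := S)
  simp only [smul_ite, smul_zero, nsmul_eq_mul] at h
  rw [sum_filter, h, ← sum_filter]
  exact sum_choose_mul_blockTerm_le hτ #S

section PairedAssignments

variable {κ ι : Type*} [DecidableEq ι]

def fiberCard (S : Finset κ) (s : κ → ι) (i : ι) : ℕ := #{k ∈ S | s k = i}

/-- Pinning `s` to `d₀` off `S` makes a sum over all of `κ → ι` a sum over assignments on `S`. -/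
def IsPairedOn (d₀ : ι) (S : Finset κ) (s : κ → ι) : Prop :=
  (∀ k ∉ S, s k = d₀) ∧ ∀ k ∈ S, 2 ≤ fiberCard S s (s k)

open scoped Classical in
/-- Equal to `∏ᵢ (σᵢ cᵢ) ^ cᵢ`, where `cᵢ` is the number of slots of `S` carrying the index `i`. -/
noncomputable def pairedWeight (d₀ : ι) (σ : ι → ℝ) (S : Finset κ) (s : κ → ι) : ℝ :=
  if IsPairedOn d₀ S s then ∏ k ∈ S, σ (s k) * fiberCard S s (s k) else 0

variable {d₀ : ι} {σ : ι → ℝ} {S : Finset κ} {s : κ → ι}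

lemma pairedWeight_of_isPairedOn (h : IsPairedOn d₀ S s) :
    pairedWeight d₀ σ S s = ∏ k ∈ S, σ (s k) * fiberCard S s (s k) := if_pos h

lemma pairedWeight_of_not_isPairedOn (h : ¬ IsPairedOn d₀ S s) : pairedWeight d₀ σ S s = 0 :=
  if_neg h

lemma pairedWeight_nonneg (hσ : ∀ i, 0 ≤ σ i) (S : Finset κ) (s : κ → ι) :
    0 ≤ pairedWeight d₀ σ S s := by
  unfold pairedWeight
  split_ifs
  · exact prod_nonneg fun k _ => mul_nonneg (hσ _) (Nat.cast_nonneg _)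
  · exact le_rfl

section Block

variable [DecidableEq κ] (d₀ S s) (a : κ)

def eraseBlock : κ → ι := (S \ {k ∈ S | s k = s a}).piecewise s fun _ => d₀

variable {d₀ S s a}

lemma fiberCard_sdiff_block {i : ι} (hi : i ≠ s a) :
    fiberCard (S \ {k ∈ S | s k = s a}) (eraseBlock d₀ S s a) i = fiberCard S s i := by
  unfold fiberCard
  congr 1
  ext k
  by_cases hkS : k ∈ S <;> by_cases hka : s k = s a <;>
    simp [eraseBlock, Finset.piecewise, hkS, hka, hi.symm]

lemma eraseBlock_of_mem {k : κ} (hk : k ∈ S \ {k ∈ S | s k = s a}) :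
    eraseBlock d₀ S s a k = s k :=
  piecewise_eq_of_mem _ _ _ hk

lemma ne_of_mem_sdiff_block {k : κ} (hk : k ∈ S \ {k ∈ S | s k = s a}) : s k ≠ s a :=
  fun hka => (mem_sdiff.1 hk).2 (mem_filter.2 ⟨(mem_sdiff.1 hk).1, hka⟩)

lemma IsPairedOn.eraseBlock (h : IsPairedOn d₀ S s) :
    IsPairedOn d₀ (S \ {k ∈ S | s k = s a}) (eraseBlock d₀ S s a) := by
  refine ⟨fun k hk => piecewise_eq_of_notMem _ _ _ hk, fun k hk => ?_⟩
  rw [eraseBlock_of_mem hk, fiberCard_sdiff_block (ne_of_mem_sdiff_block hk)]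
  exact h.2 k (mem_sdiff.1 hk).1

lemma pairedWeight_eq_mul_eraseBlock (h : IsPairedOn d₀ S s) :
    pairedWeight d₀ σ S s =
      (σ (s a) * #{k ∈ S | s k = s a}) ^ #{k ∈ S | s k = s a} *
        pairedWeight d₀ σ (S \ {k ∈ S | s k = s a}) (eraseBlock d₀ S s a) := by
  rw [pairedWeight_of_isPairedOn h, pairedWeight_of_isPairedOn h.eraseBlock,
    ← prod_sdiff (filter_subset (fun k => s k = s a) S), mul_comm]
  congr 1
  · rw [← prod_const]
    exact prod_congr rfl fun k hk => by rw [(mem_filter.1 hk).2]; rfl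
  · refine prod_congr rfl fun k hk => ?_
    rw [eraseBlock_of_mem hk, fiberCard_sdiff_block (ne_of_mem_sdiff_block hk)]

variable (d₀ S a) in
lemma injOn_block_eraseBlock :
    Set.InjOn (fun s => ({k ∈ S | s k = s a}, s a, eraseBlock d₀ S s a))
      {s | IsPairedOn d₀ S s} := by
  intro s₁ h₁ s₂ h₂ heq
  simp only [Prod.mk.injEq] at heq
  obtain ⟨hF, ha, ht⟩ := heq
  funext k
  by_cases hkS : k ∈ S
  swap
  · rw [h₁.1 k hkS, h₂.1 k hkS]
  by_cases hkF : k ∈ {k ∈ S | s₁ k = s₁ a}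
  · have hkF₂ := hF ▸ hkF
    rw [(mem_filter.1 hkF).2, (mem_filter.1 hkF₂).2, ha]
  · have hk₁ : k ∈ S \ {k ∈ S | s₁ k = s₁ a} := mem_sdiff.2 ⟨hkS, hkF⟩
    have hk₂ : k ∈ S \ {k ∈ S | s₂ k = s₂ a} := hF ▸ hk₁
    rw [← eraseBlock_of_mem hk₁, ← eraseBlock_of_mem hk₂, ht]

end Block

variable [Fintype κ] [DecidableEq κ] [Fintype ι]

lemma sum_pairedWeight_empty : ∑ s : κ → ι, pairedWeight d₀ σ ∅ s = 1 := by
  have hpaired : ∀ s : κ → ι, IsPairedOn d₀ ∅ s ↔ s = fun _ => d₀ := fun s => by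
    simp [IsPairedOn, funext_iff]
  calc ∑ s : κ → ι, pairedWeight d₀ σ ∅ s = ∑ s : κ → ι, if s = (fun _ => d₀) then 1 else 0 :=
        sum_congr rfl fun s _ => by simp [pairedWeight, hpaired]
    _ = 1 := by simp

lemma sum_pairedWeight_le_sum_blocks (hσ : ∀ i, 0 ≤ σ i) {a : κ} (ha : a ∈ S) :
    ∑ s : κ → ι, pairedWeight d₀ σ S s ≤
      ∑ F ∈ S.powerset with a ∈ F ∧ 2 ≤ #F,
        (∑ i, (σ i * #F) ^ #F) * ∑ s : κ → ι, pairedWeight d₀ σ (S \ F) s := by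
  classical
  calc ∑ s : κ → ι, pairedWeight d₀ σ S s
      = ∑ s with IsPairedOn d₀ S s, pairedWeight d₀ σ S s :=
        (sum_filter_of_ne fun _ _ hs => by_contra fun h =>
          hs (pairedWeight_of_not_isPairedOn h)).symm
    _ ≤ ∑ x ∈ {F ∈ S.powerset | a ∈ F ∧ 2 ≤ #F} ×ˢ (univ ×ˢ univ),
          (σ x.2.1 * #x.1) ^ #x.1 * pairedWeight d₀ σ (S \ x.1) x.2.2 := by
        refine sum_le_sum_of_injOn _ ((injOn_block_eraseBlock d₀ S a).mono fun s hs => ?_)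
          (fun s hs => ?_) (fun x _ => ?_) (fun s hs => (pairedWeight_eq_mul_eraseBlock ?_).le)
        · exact (mem_filter.1 hs).2
        · have h := (mem_filter.1 hs).2
          simp only [coe_product, coe_filter, mem_powerset, coe_univ, Set.univ_prod_univ,
            Set.mem_prod, Set.mem_ofPred_eq, Set.mem_univ, and_true]
          exact ⟨filter_subset _ S, mem_filter.2 ⟨ha, rfl⟩, h.2 a ha⟩
        · exact mul_nonneg (pow_nonneg (mul_nonneg (hσ _) (Nat.cast_nonneg _)) _)
            (pairedWeight_nonneg hσ _ _)
        · exact (mem_filter.1 hs).2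
    _ = _ := by
        rw [sum_product]
        refine sum_congr rfl fun F _ => ?_
        rw [sum_product, sum_mul_sum]

lemma sum_pairedWeight_le (hσ : ∀ i, 0 ≤ σ i) {τ : ℝ} (hτ : 0 ≤ τ)
    (hsum : ∀ c, 2 ≤ c → ∑ i, σ i ^ c ≤ τ ^ c) (S : Finset κ) :
    ∑ s : κ → ι, pairedWeight d₀ σ S s ≤ (2 * Real.exp 1 * τ) ^ #S * (#S : ℝ) ^ #S := by
  induction hm : #S using Nat.strong_induction_on generalizing S with
  | _ m ih =>
  obtain rfl | ⟨a, ha⟩ := S.eq_empty_or_nonempty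
  · simp [sum_pairedWeight_empty, ← hm]
  have hblock : ∀ F ∈ {F ∈ S.powerset | a ∈ F ∧ 2 ≤ #F},
      (∑ i, (σ i * #F) ^ #F) * ∑ s : κ → ι, pairedWeight d₀ σ (S \ F) s ≤ blockTerm τ #S #F := by
    intro F hF
    simp only [mem_filter, mem_powerset] at hF
    obtain ⟨hFS, haF, h2⟩ := hF
    have hcard : #(S \ F) = #S - #F := card_sdiff_of_subset hFS
    have hsumF : ∑ i, (σ i * #F) ^ #F ≤ (τ * #F) ^ #F := by
      simp only [mul_pow, ← sum_mul]
      exact mul_le_mul_of_nonneg_right (hsum _ h2) (by positivity)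
    rw [blockTerm]
    refine mul_le_mul hsumF ?_ (sum_nonneg fun s _ => pairedWeight_nonneg hσ _ _) (by positivity)
    rw [← hcard]
    exact ih _ (by have := card_pos.2 ⟨a, haF⟩; have := card_le_card hFS; omega) _ rfl
  calc ∑ s : κ → ι, pairedWeight d₀ σ S s
      ≤ ∑ F ∈ S.powerset with a ∈ F ∧ 2 ≤ #F, blockTerm τ #S #F :=
        (sum_pairedWeight_le_sum_blocks hσ ha).trans (sum_le_sum hblock)
    _ ≤ ∑ F ∈ S.powerset with 2 ≤ #F, blockTerm τ #S #F :=
        sum_le_sum_of_subset_of_nonneg (monotone_filter_right _ fun _ _ h => h.2)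
          fun _ _ _ => blockTerm_nonneg hτ _ _
    _ ≤ _ := hm ▸ sum_powerset_blockTerm_le hτ S

end PairedAssignments

section PairExpansion

variable {E : Type*} [NormedAddCommGroup E] [InnerProductSpace ℝ E] {ι : Type*} [Fintype ι]

lemma inner_sum_self_eq_sum_boolArrow (v : ι → E) :
    ⟪∑ i, v i, ∑ i, v i⟫ = ∑ b : Bool → ι, ⟪v (b true), v (b false)⟫ := by
  rw [← (Equiv.boolArrowEquivProd ι).symm.sum_comp, Fintype.sum_prod_type, sum_inner]
  simp only [inner_sum]
  exact sum_comm

lemma norm_sum_pow_eq_sum_prod_inner (v : ι → E) (q : ℕ) :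
    ‖∑ i, v i‖ ^ (2 * q) = ∑ s : Fin q × Bool → ι, ∏ k, ⟪v (s (k, true)), v (s (k, false))⟫ := by
  rw [pow_mul, ← real_inner_self_eq_norm_sq, inner_sum_self_eq_sum_boolArrow, ← Fin.prod_const,
    Fintype.prod_sum, ← (Equiv.curry (Fin q) Bool ι).sum_comp]
  rfl

lemma prod_inner_eq_sum_prod_inner_basis {β : Type*} [Fintype β] (b : OrthonormalBasis β ℝ E)
    {J : Type*} [Fintype J] [DecidableEq J] (u : J × Bool → E) :
    ∏ k, ⟪u (k, true), u (k, false)⟫ = ∑ c : J → β, ∏ kb : J × Bool, ⟪u kb, b (c kb.1)⟫ := by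
  calc ∏ k, ⟪u (k, true), u (k, false)⟫
      = ∏ k, ∑ j, ⟪u (k, true), b j⟫ * ⟪u (k, false), b j⟫ :=
        prod_congr rfl fun k _ => by
          rw [← b.sum_inner_mul_inner]
          simp only [real_inner_comm (b _) (u (k, false))]
    _ = ∑ c : J → β, ∏ kb : J × Bool, ⟪u kb, b (c kb.1)⟫ := by
        simp only [Fintype.prod_sum, Fintype.prod_prod_type, Fintype.prod_bool]

lemma abs_prod_inner_le_prod_norm {J : Type*} [Fintype J] (u : J × Bool → E) :
    |∏ k, ⟪u (k, true), u (k, false)⟫| ≤ ∏ kb, ‖u kb‖ := by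
  rw [abs_prod, Fintype.prod_prod_type]
  simp only [Fintype.prod_bool]
  exact prod_le_prod (fun _ _ => abs_nonneg _) fun _ _ => abs_real_inner_le_norm _ _

end PairExpansion

section Independence

variable {Ω : Type*} [MeasurableSpace Ω] {μ : Measure Ω} {ι F : Type*} [MeasurableSpace F]

lemma ProbabilityTheory.iIndepFun.integral_finset_prod {X : ι → Ω → F} {s : Finset ι}
    (hind : iIndepFun (fun i : s => X i.1) μ) (hX : ∀ i, Measurable (X i))
    {ψ : ι → F → ℝ} (hψ : ∀ i, Measurable (ψ i)) :
    ∫ ω, ∏ i ∈ s, ψ i (X i ω) ∂μ = ∏ i ∈ s, ∫ ω, ψ i (X i ω) ∂μ := by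
  have h := hind.integral_fun_prod_comp (f := fun i : s => ψ i.1)
    (fun i => (hX i).aemeasurable) (fun i => (hψ i).aestronglyMeasurable)
  rw [← prod_coe_sort s]
  simp_rw [← prod_coe_sort s fun i => ψ i (X i _)]
  exact h

lemma integral_prod_comp_fiberwise [DecidableEq ι] {κ : Type*} [Fintype κ] {Y : ι → Ω → F}
    (s : κ → ι) (hind : iIndepFun (fun i : univ.image s => Y i.1) μ) (hY : ∀ i, Measurable (Y i))
    {f : κ → F → ℝ} (hf : ∀ k, Measurable (f k)) :
    ∫ ω, ∏ k, f k (Y (s k) ω) ∂μ = ∏ i ∈ univ.image s, ∫ ω, ∏ k with s k = i, f k (Y i ω) ∂μ := by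
  have hfiber : ∀ ω, ∏ k, f k (Y (s k) ω) = ∏ i ∈ univ.image s, ∏ k with s k = i, f k (Y i ω) :=
    fun ω => by
      rw [← prod_fiberwise_of_maps_to (fun k _ => mem_image_of_mem s (mem_univ k))]
      exact prod_congr rfl fun i _ => prod_congr rfl fun k hk => by rw [(mem_filter.1 hk).2]
  simp_rw [hfiber]
  exact hind.integral_finset_prod hY fun i => measurable_prod _ fun k _ => hf k

end Independence

section Integrability

variable {Ω : Type*} [MeasurableSpace Ω] {μ : Measure Ω}

lemma integrable_prod_of_memLp_card [IsFiniteMeasure μ] {κ : Type*} [Fintype κ]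
    {f : κ → Ω → ℝ} (hf : ∀ k, MemLp (f k) (Fintype.card κ) μ) :
    Integrable (fun ω => ∏ k, f k ω) μ := by
  rw [← memLp_one_iff_integrable]
  refine (MemLp.prod' (s := univ) fun k _ => hf k).mono_exponent ?_
  rw [sum_const, card_univ, nsmul_eq_mul, ENNReal.one_le_inv]
  exact ENNReal.mul_inv_le_one _

lemma integrable_of_integrable_norm_sub_const [IsFiniteMeasure μ] {E : Type*}
    [NormedAddCommGroup E] {f : Ω → E} {c : E} (hf : AEStronglyMeasurable f μ)
    (h : Integrable (fun ω => ‖f ω - c‖) μ) : Integrable f μ := by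
  have hsub : Integrable (fun ω => f ω - c) μ :=
    (integrable_norm_iff (hf.sub aestronglyMeasurable_const)).1 h
  simpa [sub_eq_add_neg, integrable_add_const_iff] using hsub

lemma memLp_of_forall_integrable_norm_pow {E : Type*} [NormedAddCommGroup E] {f : Ω → E}
    (hf : AEStronglyMeasurable f μ) (h : ∀ k : ℕ, 1 ≤ k → Integrable (fun ω => ‖f ω‖ ^ k) μ)
    (m : ℕ) : MemLp f m μ := by
  rcases Nat.eq_zero_or_pos m with rfl | hm
  · simpa using memLp_zero_iff_aestronglyMeasurable.2 hf
  rw [← integrable_norm_rpow_iff hf (by simpa using hm.ne') (by simp)]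
  simpa [Real.rpow_natCast] using h m hm

end Integrability

section PairingMoments

variable {Ω : Type*} [MeasurableSpace Ω] {μ : Measure Ω} [IsFiniteMeasure μ]
  {E : Type*} [NormedAddCommGroup E] [InnerProductSpace ℝ E] [FiniteDimensional ℝ E]
  [MeasurableSpace E] [BorelSpace E] {ι : Type*} {Y : ι → Ω → E} {q : ℕ}

lemma integrable_prod_inner (hY : ∀ i, Measurable (Y i))
    (hmem : ∀ i, MemLp (Y i) (Fintype.card (Fin q × Bool)) μ) (s : Fin q × Bool → ι) :
    Integrable (fun ω => ∏ k : Fin q, ⟪Y (s (k, true)) ω, Y (s (k, false)) ω⟫) μ :=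
  (integrable_prod_of_memLp_card fun kb => (hmem (s kb)).norm).mono'
    (measurable_prod _ fun _ _ => (hY _).inner (hY _)).aestronglyMeasurable
    (ae_of_all _ fun ω => abs_prod_inner_le_prod_norm fun kb => Y (s kb) ω)

variable [DecidableEq ι]

lemma integral_prod_inner_eq_zero_of_unique (hY : ∀ i, Measurable (Y i))
    (hmem : ∀ i, MemLp (Y i) (Fintype.card (Fin q × Bool)) μ)
    (hcenter : ∀ i, ∫ ω, Y i ω ∂μ = 0) {s : Fin q × Bool → ι}
    (hind : iIndepFun (fun i : univ.image s => Y i.1) μ) {k₀ : Fin q × Bool}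
    (hk₀ : ∀ k, s k = s k₀ → k = k₀) :
    ∫ ω, ∏ k : Fin q, ⟪Y (s (k, true)) ω, Y (s (k, false)) ω⟫ ∂μ = 0 := by
  set b := stdOrthonormalBasis ℝ E
  have hint : ∀ c : Fin q → Fin (Module.finrank ℝ E),
      Integrable (fun ω => ∏ kb, ⟪Y (s kb) ω, b (c kb.1)⟫) μ :=
    fun c => integrable_prod_of_memLp_card fun kb => (hmem _).inner_const _
  have hfactor_zero : ∀ c : Fin q → Fin (Module.finrank ℝ E),
      ∫ ω, ⟪Y (s k₀) ω, b (c k₀.1)⟫ ∂μ = 0 := fun c => by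
    have hcard : (1 : ℝ≥0∞) ≤ Fintype.card (Fin q × Bool) := by
      exact_mod_cast Fintype.card_pos_iff.2 ⟨k₀⟩
    simp_rw [real_inner_comm (b _)]
    rw [integral_inner ((hmem _).integrable hcard), hcenter, inner_zero_right]
  have hfiber : ({k | s k = s k₀} : Finset (Fin q × Bool)) = {k₀} :=
    eq_singleton_iff_unique_mem.2
      ⟨mem_filter.2 ⟨mem_univ _, rfl⟩, fun k hk => hk₀ k (mem_filter.1 hk).2⟩
  calc ∫ ω, ∏ k : Fin q, ⟪Y (s (k, true)) ω, Y (s (k, false)) ω⟫ ∂μ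
      = ∫ ω, ∑ c : Fin q → Fin (Module.finrank ℝ E), ∏ kb, ⟪Y (s kb) ω, b (c kb.1)⟫ ∂μ :=
        integral_congr_ae (ae_of_all _ fun ω =>
          prod_inner_eq_sum_prod_inner_basis b fun kb => Y (s kb) ω)
    _ = ∑ c : Fin q → Fin (Module.finrank ℝ E), ∫ ω, ∏ kb, ⟪Y (s kb) ω, b (c kb.1)⟫ ∂μ :=
        integral_finsetSum _ fun c _ => hint c
    _ = 0 := sum_eq_zero fun c _ => by
        rw [integral_prod_comp_fiberwise s hind hY (f := fun kb v => ⟪v, b (c kb.1)⟫)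
          fun kb => by fun_prop]
        refine prod_eq_zero (mem_image_of_mem s (mem_univ k₀)) ?_
        simp only [hfiber, prod_singleton]
        exact hfactor_zero c

lemma integral_prod_inner_le_prod_moment (hY : ∀ i, Measurable (Y i))
    (hmem : ∀ i, MemLp (Y i) (Fintype.card (Fin q × Bool)) μ) {s : Fin q × Bool → ι}
    (hind : iIndepFun (fun i : univ.image s => Y i.1) μ) :
    ∫ ω, ∏ k : Fin q, ⟪Y (s (k, true)) ω, Y (s (k, false)) ω⟫ ∂μ ≤
      ∏ i ∈ univ.image s, ∫ ω, ‖Y i ω‖ ^ #{k | s k = i} ∂μ :=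
  calc ∫ ω, ∏ k : Fin q, ⟪Y (s (k, true)) ω, Y (s (k, false)) ω⟫ ∂μ
      ≤ ∫ ω, ∏ kb, ‖Y (s kb) ω‖ ∂μ :=
        integral_mono (integrable_prod_inner hY hmem s)
          (integrable_prod_of_memLp_card fun kb => (hmem (s kb)).norm)
          fun ω => (le_abs_self _).trans (abs_prod_inner_le_prod_norm fun kb => Y (s kb) ω)
    _ = ∏ i ∈ univ.image s, ∫ ω, ‖Y i ω‖ ^ #{k | s k = i} ∂μ := by
        simp only [integral_prod_comp_fiberwise s hind hY (f := fun _ v => ‖v‖)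
          fun _ => measurable_norm, prod_const]

lemma integral_prod_inner_le_pairedWeight [Fintype ι] (d₀ : ι) {σ : ι → ℝ}
    (hY : ∀ i, Measurable (Y i)) (hmem : ∀ i, MemLp (Y i) (Fintype.card (Fin q × Bool)) μ)
    (hcenter : ∀ i, ∫ ω, Y i ω ∂μ = 0)
    (hmom : ∀ i (k : ℕ), 1 ≤ k → ∫ ω, ‖Y i ω‖ ^ k ∂μ ≤ σ i ^ k * (k : ℝ) ^ k)
    {s : Fin q × Bool → ι} (hind : iIndepFun (fun i : univ.image s => Y i.1) μ) :
    ∫ ω, ∏ k : Fin q, ⟪Y (s (k, true)) ω, Y (s (k, false)) ω⟫ ∂μ ≤ pairedWeight d₀ σ univ s := by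
  by_cases hs : IsPairedOn d₀ univ s
  · rw [pairedWeight_of_isPairedOn hs]
    calc _ ≤ ∏ i ∈ univ.image s, ∫ ω, ‖Y i ω‖ ^ #{k | s k = i} ∂μ :=
          integral_prod_inner_le_prod_moment hY hmem hind
      _ ≤ ∏ i ∈ univ.image s, (σ i * #{k | s k = i}) ^ #{k | s k = i} := by
          refine prod_le_prod (fun i _ => integral_nonneg fun ω => by positivity) fun i hi => ?_
          obtain ⟨k, -, rfl⟩ := mem_image.1 hi
          rw [mul_pow]
          exact hmom (s k) #{j | s j = s k} (card_pos.2 ⟨k, by simp⟩)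
      _ = ∏ k, σ (s k) * fiberCard univ s (s k) :=
          (prod_comp (fun i => σ i * fiberCard univ s i) s).symm
  · rw [pairedWeight_of_not_isPairedOn hs]
    obtain ⟨k₀, hk₀⟩ : ∃ k₀, fiberCard univ s (s k₀) < 2 := by
      by_contra! h
      exact hs ⟨fun k hk => absurd (mem_univ k) hk, fun k _ => h k⟩
    refine (integral_prod_inner_eq_zero_of_unique hY hmem hcenter hind (k₀ := k₀) fun k hk => ?_).le
    exact card_le_one.1 (Nat.lt_succ_iff.1 hk₀) k (mem_filter.2 ⟨mem_univ _, hk⟩) k₀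
      (mem_filter.2 ⟨mem_univ _, rfl⟩)

lemma integral_norm_sum_pow_le_sum_pairedWeight [Fintype ι] (d₀ : ι) {σ : ι → ℝ}
    (hY : ∀ i, Measurable (Y i)) (hmem : ∀ i, MemLp (Y i) (Fintype.card (Fin q × Bool)) μ)
    (hcenter : ∀ i, ∫ ω, Y i ω ∂μ = 0)
    (hmom : ∀ i (k : ℕ), 1 ≤ k → ∫ ω, ‖Y i ω‖ ^ k ∂μ ≤ σ i ^ k * (k : ℝ) ^ k)
    (hind : ∀ S : Finset ι, #S ≤ Fintype.card (Fin q × Bool) → iIndepFun (fun i : S => Y i.1) μ) :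
    ∫ ω, ‖∑ i, Y i ω‖ ^ (2 * q) ∂μ ≤ ∑ s : Fin q × Bool → ι, pairedWeight d₀ σ univ s := by
  simp_rw [norm_sum_pow_eq_sum_prod_inner]
  rw [integral_finsetSum _ fun s _ => integrable_prod_inner hY hmem s]
  exact sum_le_sum fun s _ => integral_prod_inner_le_pairedWeight d₀ hY hmem hcenter hmom
    (hind _ card_image_le)

end PairingMoments

theorem pwise_independent_vector_moment_bound_general
    {Ω : Type*} [MeasurableSpace Ω] (μ : Measure Ω) [IsProbabilityMeasure μ]
    (n d p : ℕ) (hpeven : Even p)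
    (X : Fin n → Ω → EuclideanSpace ℝ (Fin d)) (σ : Fin n → ℝ)
    (hσ : ∀ i, 0 ≤ σ i)
    (hmeas : ∀ i, Measurable (X i))
    (hint : ∀ (i : Fin n) (k : ℕ), 1 ≤ k →
      Integrable (fun ω => ‖X i ω - ∫ x, X i x ∂μ‖ ^ k) μ)
    (hsub : ∀ (i : Fin n) (k : ℕ), 1 ≤ k →
      (∫ ω, ‖X i ω - ∫ x, X i x ∂μ‖ ^ k ∂μ) ≤ σ i ^ k * (k : ℝ) ^ k)
    (hindep : ∀ s : Finset (Fin n), s.card ≤ p →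
      iIndepFun (m := fun _ : s => (inferInstance : MeasurableSpace (EuclideanSpace ℝ (Fin d))))
        (fun i : s => X i.1) μ) :
    (∫ ω, ‖(∑ i, X i ω) - ∫ x, ∑ i, X i x ∂μ‖ ^ p ∂μ) ≤
      (3 * Real.sqrt (∑ i, σ i ^ 2)) ^ p * (2 * (p : ℝ)) ^ p := by
  rcases isEmpty_or_nonempty (Fin n) with hn | ⟨⟨d₀⟩⟩
  · rcases Nat.eq_zero_or_pos p with rfl | hp0
    · simp
    · simp [zero_pow hp0.ne']
  obtain ⟨q, rfl⟩ := hpeven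
  set Y : Fin n → Ω → EuclideanSpace ℝ (Fin d) := fun i ω => X i ω - ∫ x, X i x ∂μ
  have hY : ∀ i, Measurable (Y i) := fun i => (hmeas i).sub_const _
  have hXint : ∀ i, Integrable (X i) μ := fun i =>
    integrable_of_integrable_norm_sub_const (hmeas i).aestronglyMeasurable
      (by simpa using hint i 1 le_rfl)
  have hcard : Fintype.card (Fin q × Bool) = q + q := by simp [mul_two]
  have hmoment := integral_norm_sum_pow_le_sum_pairedWeight d₀ hY
    (fun i => memLp_of_forall_integrable_norm_pow (hY i).aestronglyMeasurable (hint i) _)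
    (fun i => by simp [Y, integral_sub (hXint i) (integrable_const _)]) hsub
    fun S hS => (hindep S (hcard ▸ hS)).comp (fun i v => v - ∫ x, X i.1 x ∂μ)
      fun _ => measurable_id.sub_const _
  have hweights := sum_pairedWeight_le (d₀ := d₀) hσ (Real.sqrt_nonneg _)
    (fun _ => sum_pow_le_sqrt_sum_sq_pow hσ) (univ : Finset (Fin q × Bool))
  rw [card_univ, hcard] at hweights
  calc ∫ ω, ‖(∑ i, X i ω) - ∫ x, ∑ i, X i x ∂μ‖ ^ (q + q) ∂μ
      = ∫ ω, ‖∑ i, Y i ω‖ ^ (2 * q) ∂μ := by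
        simp only [Y, sum_sub_distrib, integral_finsetSum _ fun i _ => hXint i, two_mul]
    _ ≤ _ := hmoment.trans hweights
    _ ≤ _ := two_mul_exp_one_mul_pow_le (Real.sqrt_nonneg _) _

/-- Corollary `cor:pwiseconcentration:vector`, moment bound: if
`X₁, …, Xₙ` are random vectors in `ℝ^d` with `E[‖Xᵢ − E Xᵢ‖^k] ≤ σᵢ^k k^k` for all
`k ≥ 1`, and the family is `p`-wise independent for an even positive integer `p`, then
with `σ² = ∑ᵢ σᵢ²` and `X = ∑ᵢ Xᵢ` we have `E[‖X − E X‖^p] ≤ (3σ)^p (2p)^p`. -/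
theorem pwise_independent_vector_moment_bound
    {Ω : Type*} [MeasurableSpace Ω] (μ : Measure Ω) [IsProbabilityMeasure μ]
    (n d p : ℕ) (hp : 1 ≤ p) (hpeven : Even p)
    (X : Fin n → Ω → EuclideanSpace ℝ (Fin d)) (σ : Fin n → ℝ)
    (hσ : ∀ i, 0 ≤ σ i)
    (hmeas : ∀ i, Measurable (X i))
    (hint : ∀ (i : Fin n) (k : ℕ), 1 ≤ k →
      Integrable (fun ω => ‖X i ω - ∫ x, X i x ∂μ‖ ^ k) μ)
    (hsub : ∀ (i : Fin n) (k : ℕ), 1 ≤ k →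
      (∫ ω, ‖X i ω - ∫ x, X i x ∂μ‖ ^ k ∂μ) ≤ σ i ^ k * (k : ℝ) ^ k)
    (hindep : ∀ s : Finset (Fin n), s.card ≤ p →
      iIndepFun (m := fun _ : s => (inferInstance : MeasurableSpace (EuclideanSpace ℝ (Fin d))))
        (fun i : s => X i.1) μ) :
    (∫ ω, ‖(∑ i, X i ω) - ∫ x, ∑ i, X i x ∂μ‖ ^ p ∂μ) ≤
      (3 * Real.sqrt (∑ i, σ i ^ 2)) ^ p * (2 * (p : ℝ)) ^ p :=
  pwise_independent_vector_moment_bound_general μ n d p hpeven X σ hσ hmeas hint hsub hindep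
end

section
/- Let V : [h] × [n_1] × [n_2] → ℝ be a third-order tensor, let κ ≥ 1 be a window size and s ≥ 1 a stride, and set n_1' = ⌊(n_1 − κ)/s⌋ and n_2' = ⌊(n_2 − κ)/s⌋. For (i,j) ∈ [n_1'] × [n_2'], let V_{(s(i−1)+1, s(j−1)+1), κ} denote the h × κ × κ sub-tensor of V consisting of the entries V(c, s(i−1)+a, s(j−1)+b) for c ∈ [h], a, b ∈ [κ]. Then Σ_{i=1}^{n_1'} Σ_{j=1}^{n_2'} ‖V_{(s(i−1)+1, s(j−1)+1), κ}‖_F² ≤ ⌈κ/s⌉² · ‖V‖_F². -/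
open Finset


lemma card_window_bound (N κ s x : ℕ) (hs : 1 ≤ s) (hκ : 1 ≤ κ) :
    ((Finset.range N).filter (fun i => s * i ≤ x ∧ x < s * i + κ)).card
      ≤ (⌈(κ:ℝ)/(s:ℝ)⌉).toNat := by
  set M := (⌈(κ:ℝ)/(s:ℝ)⌉).toNat with hM
  have hsr : (0:ℝ) < s := by positivity
  have hκM : κ ≤ s * M := by
    have h1 : (κ:ℝ)/(s:ℝ) ≤ (⌈(κ:ℝ)/(s:ℝ)⌉ : ℝ) := Int.le_ceil _
    have h2 : ((⌈(κ:ℝ)/(s:ℝ)⌉).toNat : ℝ) = (⌈(κ:ℝ)/(s:ℝ)⌉ : ℝ) := by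
      exact_mod_cast congrArg Int.cast (Int.toNat_of_nonneg (Int.ceil_nonneg (by positivity : (0:ℝ) ≤ (κ:ℝ)/(s:ℝ))))
    have : (κ:ℝ) ≤ (s:ℝ) * M := by
      rw [hM, h2]
      calc (κ:ℝ) = (κ:ℝ)/(s:ℝ) * s := by field_simp
        _ ≤ _ * s := by exact mul_le_mul_of_nonneg_right h1 (le_of_lt hsr)
        _ = _ := by ring
    exact_mod_cast this
  by_contra hc
  push_neg at hc
  set T := (Finset.range N).filter (fun i => s * i ≤ x ∧ x < s * i + κ) with hT
  have hne : T.Nonempty := Finset.card_pos.mp (by omega)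
  set m := T.min' hne
  set m' := T.max' hne
  have hmm : m ≤ m' := Finset.min'_le T m' (T.max'_mem hne)
  have hsub : T ⊆ Finset.Icc m m' := fun i hi =>
    Finset.mem_Icc.mpr ⟨Finset.min'_le T i hi, Finset.le_max' T i hi⟩
  have hcard : T.card ≤ m' + 1 - m := by
    have := Finset.card_le_card hsub
    simpa [Nat.card_Icc] using this
  have hmem1 := Finset.min'_mem T hne
  have hmem2 := Finset.max'_mem T hne
  have h1 : x < s * m + κ := (Finset.mem_filter.mp hmem1).2.2
  have h2 : s * m' ≤ x := (Finset.mem_filter.mp hmem2).2.1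
  have hM' : M ≤ m' - m := by omega
  have : s * M + s * m ≤ s * m' := by
    have : s * M ≤ s * (m' - m) := Nat.mul_le_mul_left s hM'
    have h3 : s * (m' - m) + s * m = s * m' := by
      rw [← Nat.mul_add]; congr 1; omega
    omega
  omega

lemma window_sum_le (n κ s : ℕ) (hs : 1 ≤ s) (hκ : 1 ≤ κ) (hκn : κ ≤ n)
    (g : ℕ → ℝ) (hg : ∀ x, 0 ≤ g x) :
    ∑ i ∈ Finset.range ((n - κ) / s), ∑ a ∈ Finset.range κ, g (s * i + a)
      ≤ (⌈(κ:ℝ)/(s:ℝ)⌉ : ℝ) * ∑ x ∈ Finset.range n, g x := by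
  set N := (n - κ) / s with hN
  set M := (⌈(κ:ℝ)/(s:ℝ)⌉).toNat with hMdef
  have hMcast : ((M:ℕ) : ℝ) = (⌈(κ:ℝ)/(s:ℝ)⌉ : ℝ) := by
    exact_mod_cast congrArg Int.cast (Int.toNat_of_nonneg (Int.ceil_nonneg (by positivity : (0:ℝ) ≤ (κ:ℝ)/(s:ℝ))))
  -- window containment: for i < N, Ico (s*i) (s*i+κ) ⊆ range n
  have hwin : ∀ i ∈ Finset.range N, Finset.Ico (s*i) (s*i+κ) ⊆ Finset.range n := by
    intro i hi
    have hi' : i < N := Finset.mem_range.mp hi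
    have h1 : (i+1) * s ≤ n - κ := (Nat.le_div_iff_mul_le (by omega)).mp (by omega)
    intro x hx
    have := Finset.mem_Ico.mp hx
    simp only [Finset.mem_range]
    nlinarith [Nat.sub_add_cancel hκn]
  have step1 : ∀ i ∈ Finset.range N,
      ∑ a ∈ Finset.range κ, g (s * i + a)
        = ∑ x ∈ Finset.range n, if s * i ≤ x ∧ x < s * i + κ then g x else 0 := by
    intro i hi
    have h1 : ∑ a ∈ Finset.range κ, g (s * i + a) = ∑ x ∈ Finset.Ico (s*i) (s*i+κ), g x := by
      rw [Finset.sum_Ico_eq_sum_range]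
      simp
    have h2 : Finset.Ico (s*i) (s*i+κ) = (Finset.range n).filter (fun x => s*i ≤ x ∧ x < s*i+κ) := by
      ext x
      simp only [Finset.mem_Ico, Finset.mem_filter, Finset.mem_range]
      constructor
      · intro hx
        exact ⟨Finset.mem_range.mp (hwin i hi (Finset.mem_Ico.mpr hx)), hx⟩
      · tauto
    rw [h1, h2, Finset.sum_filter]
  calc ∑ i ∈ Finset.range N, ∑ a ∈ Finset.range κ, g (s * i + a)
      = ∑ i ∈ Finset.range N, ∑ x ∈ Finset.range n,
          if s * i ≤ x ∧ x < s * i + κ then g x else 0 := Finset.sum_congr rfl step1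
    _ = ∑ x ∈ Finset.range n, ∑ i ∈ Finset.range N,
          if s * i ≤ x ∧ x < s * i + κ then g x else 0 := Finset.sum_comm
    _ = ∑ x ∈ Finset.range n,
          (((Finset.range N).filter (fun i => s * i ≤ x ∧ x < s * i + κ)).card : ℝ) * g x := by
        apply Finset.sum_congr rfl
        intro x _
        rw [← Finset.sum_filter, Finset.sum_const, nsmul_eq_mul]
    _ ≤ ∑ x ∈ Finset.range n, (M : ℝ) * g x := by
        apply Finset.sum_le_sum
        intro x _
        apply mul_le_mul_of_nonneg_right _ (hg x)
        exact_mod_cast card_window_bound N κ s x hs hκ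
    _ = (⌈(κ:ℝ)/(s:ℝ)⌉ : ℝ) * ∑ x ∈ Finset.range n, g x := by
        rw [← Finset.mul_sum, hMcast]

lemma rot3 {M : Type*} [AddCommMonoid M] (A B C : Finset ℕ) (f : ℕ → ℕ → ℕ → M) :
    ∑ x ∈ A, ∑ y ∈ B, ∑ z ∈ C, f x y z = ∑ z ∈ C, ∑ x ∈ A, ∑ y ∈ B, f x y z :=
  (Finset.sum_congr rfl fun x _ => Finset.sum_comm).trans Finset.sum_comm


set_option maxHeartbeats 1000000 in
/-- for a third-order tensor `V ∈ ℝ^{h × n₁ × n₂}` (indexed here with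
`0`-based indices, entries outside the ranges being irrelevant), window size `κ ≥ 1`,
stride `s ≥ 1`, and `n₁' = ⌊(n₁ − κ)/s⌋`, `n₂' = ⌊(n₂ − κ)/s⌋`, the sum of the squared
Frobenius norms of the `h × κ × κ` sliding sub-tensors is at most
`⌈κ/s⌉² ‖V‖_F²`:
`∑_{i=1}^{n₁'} ∑_{j=1}^{n₂'} ‖V_{(s(i−1)+1, s(j−1)+1), κ}‖_F² ≤ ⌈κ/s⌉² ‖V‖_F²`. -/
theorem sliding_window_frobenius_bound (h n₁ n₂ κ s : ℕ)
    (hκ : 1 ≤ κ) (hs : 1 ≤ s) (hκ₁ : κ ≤ n₁) (hκ₂ : κ ≤ n₂)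
    (V : ℕ → ℕ → ℕ → ℝ) :
    ∑ i ∈ Finset.range ((n₁ - κ) / s), ∑ j ∈ Finset.range ((n₂ - κ) / s),
      ∑ c ∈ Finset.range h, ∑ a ∈ Finset.range κ, ∑ b ∈ Finset.range κ,
        V c (s * i + a) (s * j + b) ^ 2
      ≤ (⌈(κ : ℝ) / (s : ℝ)⌉ : ℝ) ^ 2 *
          ∑ c ∈ Finset.range h, ∑ x ∈ Finset.range n₁, ∑ y ∈ Finset.range n₂,
            V c x y ^ 2 := by
  set C : ℝ := (⌈(κ : ℝ) / (s : ℝ)⌉ : ℝ) with hC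
  have hC0 : 0 ≤ C := by
    rw [hC]
    exact_mod_cast Int.ceil_nonneg (by positivity : (0:ℝ) ≤ (κ:ℝ)/(s:ℝ))
  calc ∑ i ∈ Finset.range ((n₁ - κ) / s), ∑ j ∈ Finset.range ((n₂ - κ) / s),
      ∑ c ∈ Finset.range h, ∑ a ∈ Finset.range κ, ∑ b ∈ Finset.range κ,
        V c (s * i + a) (s * j + b) ^ 2
      = ∑ i ∈ Finset.range ((n₁ - κ) / s), ∑ j ∈ Finset.range ((n₂ - κ) / s),
          ∑ b ∈ Finset.range κ, ∑ c ∈ Finset.range h, ∑ a ∈ Finset.range κ,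
            V c (s * i + a) (s * j + b) ^ 2 := by
        refine Finset.sum_congr rfl fun i _ => Finset.sum_congr rfl fun j _ => ?_
        exact rot3 _ _ _ (fun c a b => V c (s * i + a) (s * j + b) ^ 2)
    _ ≤ ∑ i ∈ Finset.range ((n₁ - κ) / s),
          C * ∑ y ∈ Finset.range n₂, ∑ c ∈ Finset.range h, ∑ a ∈ Finset.range κ,
            V c (s * i + a) y ^ 2 := by
        refine Finset.sum_le_sum fun i _ => ?_
        exact window_sum_le n₂ κ s hs hκ hκ₂
          (fun y => ∑ c ∈ Finset.range h, ∑ a ∈ Finset.range κ, V c (s * i + a) y ^ 2)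
          (fun y => by positivity)
    _ = C * ∑ i ∈ Finset.range ((n₁ - κ) / s), ∑ a ∈ Finset.range κ,
          ∑ y ∈ Finset.range n₂, ∑ c ∈ Finset.range h, V c (s * i + a) y ^ 2 := by
        rw [← Finset.mul_sum]
        congr 1
        refine Finset.sum_congr rfl fun i _ => ?_
        exact rot3 _ _ _ (fun y c a => V c (s * i + a) y ^ 2)
    _ ≤ C * (C * ∑ x ∈ Finset.range n₁, ∑ y ∈ Finset.range n₂, ∑ c ∈ Finset.range h,
          V c x y ^ 2) := by
        refine mul_le_mul_of_nonneg_left ?_ hC0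
        exact window_sum_le n₁ κ s hs hκ hκ₁
          (fun x => ∑ y ∈ Finset.range n₂, ∑ c ∈ Finset.range h, V c x y ^ 2)
          (fun x => by positivity)
    _ = C ^ 2 * ∑ c ∈ Finset.range h, ∑ x ∈ Finset.range n₁, ∑ y ∈ Finset.range n₂,
          V c x y ^ 2 := by
        rw [← mul_assoc, ← sq, rot3 _ _ _ (fun x y c => V c x y ^ 2)]
end
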